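/- Let κ be a normal function with κ_0 = 0, α an epsilon number, and ν divisible by κ_α. Define ι(α·δ + γ) = ν + κ_α·δ + κ_γ for γ < α on an initial segment D of the ordinals. If D is bounded and closed under the relevant operations (i.e., D is a closed initial segment [0, λ_max]), then the image ι[D] has a maximal element, namely ι(λ_max), and ι restricted to D is an order isomorphism onto its image. -/

import Mathlib

open Ordinal Set

namespace Ordinal

theorem mul_add_lt_mul_of_lt {a b c d : Ordinal} (hc : c < a) (hb : b < d) :
    a * b + c < a * d :=
  calc a * b + c < a * b + a := add_lt_add_right hc _
    _ = a * Order.succ b := (mul_succ a b).symm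
    _ ≤ a * d := mul_le_mul_right (Order.succ_le_of_lt hb) a

/-- Both `x` and its image are ordered lexicographically by `(x / α, x % α)`. -/
theorem strictMono_mul_div_add_mod {κ : Ordinal → Ordinal} (hκ : StrictMono κ) {α : Ordinal}
    (hα : α ≠ 0) : StrictMono fun x => κ α * (x / α) + κ (x % α) := by
  intro x y hxy
  have hdiv : x / α ≤ y / α := (mul_le_iff_le_div hα).1 ((mul_div_le x α).trans hxy.le)
  rcases hdiv.lt_or_eq with hdiv | hdiv
  · exact (mul_add_lt_mul_of_lt (hκ (mod_lt x hα)) hdiv).trans_le le_self_add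
  · have hmod : α * (y / α) + x % α < α * (y / α) + y % α := by
      rwa [div_add_mod, ← hdiv, div_add_mod]
    simp only [hdiv]
    exact add_lt_add_right (hκ ((add_lt_add_iff_left _).1 hmod)) _

end Ordinal

theorem stmt19_general (κ : Ordinal → Ordinal) (α ν lamMax : Ordinal)
    (ι : Ordinal → Ordinal)
    (hκ : Order.IsNormal κ)
    (heps : (omega0 : Ordinal) ^ α = α)
    (hι : ∀ δ γ : Ordinal, γ < α → α * δ + γ ≤ lamMax →
      ι (α * δ + γ) = ν + κ α * δ + κ γ) :
    (ι lamMax ∈ ι '' Set.Iic lamMax ∧ ∀ z ∈ ι '' Set.Iic lamMax, z ≤ ι lamMax) ∧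
    ∀ x y : Ordinal, x ≤ lamMax → y ≤ lamMax → (x < y ↔ ι x < ι y) := by
  have hα : α ≠ 0 := by
    rintro rfl
    simp at heps
  have hι_eq : ∀ x ≤ lamMax, ι x = ν + (κ α * (x / α) + κ (x % α)) := by
    intro x hx
    rw [← add_assoc, ← hι _ _ (mod_lt x hα) (by rwa [div_add_mod]), div_add_mod]
  have hmono : StrictMonoOn ι (Iic lamMax) := by
    intro x hx y hy hxy
    rw [hι_eq x hx, hι_eq y hy]
    exact add_lt_add_right (strictMono_mul_div_add_mod hκ.strictMono hα hxy) ν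
  exact ⟨hmono.monotoneOn.map_isGreatest isGreatest_Iic,
    fun x y hx hy => (hmono.lt_iff_lt hx hy).symm⟩

/-- If ι(α·δ + γ) = ν + κ_α·δ + κ_γ is defined on a bounded closed initial
segment D = [0, λ_max], then ι[D] has maximal element ι(λ_max) and ι is an
order isomorphism of D onto its image (strictly order preserving). -/
theorem stmt19 (κ : Ordinal → Ordinal) (α ν lamMax : Ordinal)
    (ι : Ordinal → Ordinal)
    (hκ : Order.IsNormal κ) (h0 : κ 0 = 0)
    (heps : (omega0 : Ordinal) ^ α = α)
    (hν : ∃ ξ, ν = κ α * ξ)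
    (hι : ∀ δ γ : Ordinal, γ < α → α * δ + γ ≤ lamMax →
      ι (α * δ + γ) = ν + κ α * δ + κ γ) :
    (ι lamMax ∈ ι '' Set.Iic lamMax ∧ ∀ z ∈ ι '' Set.Iic lamMax, z ≤ ι lamMax) ∧
    ∀ x y : Ordinal, x ≤ lamMax → y ≤ lamMax → (x < y ↔ ι x < ι y) :=
  stmt19_general κ α ν lamMax ι hκ heps hι
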